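/- arXiv:1206.3161 — 2 statements merged into one kernel-verified Lean document; each statement's English description precedes it below -/
import Mathlib

section
/- Let n ≥ 1, let u, v : Fin n → ℂ be unit vectors (∑ i, |u i|² = 1 and ∑ i, |v i|² = 1), and let θ ∈ [0, π/2]. For each i define the quaternion q i = √2 (cos θ · u i + sin θ · (v i)𝐣), i.e. the quaternion with components (√2 cos θ · Re(u i), √2 cos θ · Im(u i), √2 sin θ · Re(v i), √2 sin θ · Im(v i)). Then the polygon with edges Hopf(q i) closes, i.e. ∑ i, Hopf(q i) = 0, if and only if θ = π/4 and ∑ i, conj(u i) · v i = 0 (that is, (u,v) is a Hermitian orthonormal 2-frame in ℂⁿ). -/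
/-! Writing `c = cos θ`, `s = sin θ`, the Hopf image of `√2 (c u + s v 𝐣)` is
`2 (c² |u|² - s² |v|²) 𝐢 + 2 sin 2θ (- Im(ū v) 𝐣 + Re(ū v) 𝐤)`. Summing over the coordinates and
using `‖u‖ = ‖v‖ = 1`, the closing vector is `2 cos 2θ 𝐢 + 2 sin 2θ (- Im⟨u,v⟩ 𝐣 + Re⟨u,v⟩ 𝐤)`.
It vanishes iff `cos 2θ = 0`, i.e. `θ = π/4` on `[0, π/2]`, and then `sin 2θ = 1` forces
`⟨u,v⟩ = 0`. -/

open scoped Quaternion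
open Real

/-- The quaternion unit 𝐢. -/
noncomputable def qI : ℍ[ℝ] := ⟨0, 1, 0, 0⟩

/-- The Hopf map `q ↦ q̄ · 𝐢 · q`. -/
noncomputable def Hopf (q : ℍ[ℝ]) : ℍ[ℝ] := star q * qI * q

/-- The quaternion `√2 (cos θ · u + sin θ · v·𝐣)` for complex numbers `u`, `v`. -/
noncomputable def joinCoord (θ : ℝ) (u v : ℂ) : ℍ[ℝ] :=
  ⟨Real.sqrt 2 * Real.cos θ * u.re, Real.sqrt 2 * Real.cos θ * u.im,
   Real.sqrt 2 * Real.sin θ * v.re, Real.sqrt 2 * Real.sin θ * v.im⟩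

lemma hopf_eq (q : ℍ[ℝ]) :
    Hopf q = ⟨0, q.re ^ 2 + q.imI ^ 2 - q.imJ ^ 2 - q.imK ^ 2,
      2 * (q.imI * q.imJ - q.re * q.imK), 2 * (q.re * q.imJ + q.imI * q.imK)⟩ := by
  ext <;>
  simp only [Hopf, Quaternion.re_mul, Quaternion.imI_mul, Quaternion.imJ_mul, Quaternion.imK_mul,
    Quaternion.re_star, Quaternion.imI_star, Quaternion.imJ_star, Quaternion.imK_star] <;>
  simp only [qI] <;> ring

lemma hopf_joinCoord (θ : ℝ) (u v : ℂ) :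
    Hopf (joinCoord θ u v) =
      ⟨0, 2 * (cos θ ^ 2 * ‖u‖ ^ 2 - sin θ ^ 2 * ‖v‖ ^ 2),
        -(2 * sin (2 * θ) * (starRingEnd ℂ u * v).im),
        2 * sin (2 * θ) * (starRingEnd ℂ u * v).re⟩ := by
  have h2 : √2 ^ 2 = 2 := sq_sqrt zero_le_two
  rw [hopf_eq]
  ext <;> simp only [joinCoord, sin_two_mul, Complex.sq_norm, Complex.normSq_apply,
    Complex.mul_re, Complex.mul_im, Complex.conj_re, Complex.conj_im] <;>
  ring_nf <;> rw [h2] <;> ring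

lemma QuaternionAlgebra.sum_mk {R ι : Type*} [CommRing R] {c₁ c₂ c₃ : R} (s : Finset ι)
    (a b c d : ι → R) :
    ∑ i ∈ s, (⟨a i, b i, c i, d i⟩ : ℍ[R,c₁,c₂,c₃]) =
      ⟨∑ i ∈ s, a i, ∑ i ∈ s, b i, ∑ i ∈ s, c i, ∑ i ∈ s, d i⟩ := by
  induction s using Finset.cons_induction with
  | empty => rfl
  | cons i s hi ih => simp only [Finset.sum_cons, ih, QuaternionAlgebra.mk_add_mk]

lemma sum_hopf_joinCoord {ι : Type*} [Fintype ι] (u v : ι → ℂ)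
    (hu : ∑ i, ‖u i‖ ^ 2 = 1) (hv : ∑ i, ‖v i‖ ^ 2 = 1) (θ : ℝ) :
    ∑ i, Hopf (joinCoord θ (u i) (v i)) =
      ⟨0, 2 * cos (2 * θ), -(2 * sin (2 * θ) * (∑ i, starRingEnd ℂ (u i) * v i).im),
        2 * sin (2 * θ) * (∑ i, starRingEnd ℂ (u i) * v i).re⟩ := by
  simp only [hopf_joinCoord]
  refine (QuaternionAlgebra.sum_mk _ _ _ _ _).trans ?_
  simp only [Finset.sum_const_zero, ← Finset.mul_sum, Finset.sum_sub_distrib,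
    Finset.sum_neg_distrib, ← Complex.re_sum, ← Complex.im_sum, hu, hv, mul_one,
    cos_two_mul']

lemma eq_pi_div_four_iff_cos_two_mul_eq_zero {θ : ℝ} (hθ : θ ∈ Set.Icc 0 (π / 2)) :
    θ = π / 4 ↔ cos (2 * θ) = 0 := by
  constructor
  · rintro rfl
    rw [show 2 * (π / 4) = π / 2 by ring, cos_pi_div_two]
  · intro h
    have h2θ : 2 * θ ∈ Set.Icc 0 π := ⟨by linarith [hθ.1], by linarith [hθ.2]⟩
    have := injOn_cos h2θ ⟨by positivity, by linarith [pi_pos]⟩ (h.trans cos_pi_div_two.symm)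
    linarith

theorem closes_iff_stiefel_frame_general (n : ℕ) (u v : Fin n → ℂ)
    (hu : ∑ i, ‖u i‖ ^ 2 = 1) (hv : ∑ i, ‖v i‖ ^ 2 = 1)
    (θ : ℝ) (hθ : θ ∈ Set.Icc (0 : ℝ) (π / 2)) :
    (∑ i, Hopf (joinCoord θ (u i) (v i))) = 0
      ↔ θ = π / 4 ∧ ∑ i, (starRingEnd ℂ) (u i) * v i = 0 := by
  rw [sum_hopf_joinCoord u v hu hv]
  refine Quaternion.ext_iff.trans ?_
  rw [eq_pi_div_four_iff_cos_two_mul_eq_zero hθ, Complex.ext_iff]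
  simp only [Quaternion.re_zero, Quaternion.imI_zero, Quaternion.imJ_zero,
    Quaternion.imK_zero, Complex.zero_re, Complex.zero_im]
  constructor
  · rintro ⟨-, hc, him, hre⟩
    have hc : cos (2 * θ) = 0 := by linarith
    have hs : sin (2 * θ) ≠ 0 := by
      rcases cos_eq_zero_iff_sin_eq.mp hc with h | h <;> simp [h]
    exact ⟨hc, by simpa [hs] using hre, by simpa [hs] using him⟩
  · rintro ⟨hc, hre, him⟩
    simp [hc, hre, him]

/-- The polygon with edges `Hopf(√2(cos θ · u i + sin θ · (v i)𝐣))` closes if and only if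
`θ = π/4` and `u ⊥ v`, i.e. `(u,v)` is a Hermitian orthonormal 2-frame in ℂⁿ. -/
theorem closes_iff_stiefel_frame (n : ℕ) (hn : 1 ≤ n) (u v : Fin n → ℂ)
    (hu : ∑ i, ‖u i‖ ^ 2 = 1) (hv : ∑ i, ‖v i‖ ^ 2 = 1)
    (θ : ℝ) (hθ : θ ∈ Set.Icc (0 : ℝ) (π / 2)) :
    (∑ i, Hopf (joinCoord θ (u i) (v i))) = 0
      ↔ θ = π / 4 ∧ ∑ i, (starRingEnd ℂ) (u i) * v i = 0 :=
  closes_iff_stiefel_frame_general n u v hu hv θ hθ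
end

section
/- Let n ≥ 1 and let μ be the uniform (rotation-invariant) probability measure on the unit sphere in EuclideanSpace ℝ (Fin (4n)). For x on the sphere let q_i(x) ∈ ℍ be the quaternion whose four components are the coordinates of x in block i (coordinates 4i, 4i+1, 4i+2, 4i+3). Then the expected squared failure-to-close of a random spatial arm of length 2 satisfies ∫ ‖∑_{i=0}^{n-1} 2·Hopf(q_i(x))‖² dμ(x) = 12/(2n+1), that is, E(ℓ², Arm₃(n)) = n · E(|e_j|², Arm₃(n)) = 6/(n + 1/2). -/
open scoped Quaternion
open MeasureTheory Real

/-- The quaternion formed from the `i`-th block of four coordinates of `x ∈ ℝ^{4n}`. -/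
noncomputable def blockQuat (n : ℕ) (i : Fin n) (x : EuclideanSpace ℝ (Fin (4 * n))) : ℍ[ℝ] :=
  ⟨x ⟨4 * i, by have := i.isLt; omega⟩, x ⟨4 * i + 1, by have := i.isLt; omega⟩,
   x ⟨4 * i + 2, by have := i.isLt; omega⟩, x ⟨4 * i + 3, by have := i.isLt; omega⟩⟩

/-!
Write `Hᵢ = Hopf (qᵢ x)`. Left multiplication of the `i`-th block by `𝐣` is an isometry of `ℝ^{4n}`
that negates `Hᵢ` and fixes every other `Hⱼ`, so the cross terms `E ⟪Hᵢ, Hⱼ⟫` vanish and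
`E ℓ² = 4 ∑ᵢ E ‖Hᵢ‖² = 4 ∑ᵢ E ‖qᵢ‖⁴`. For a uniform point `x` of the unit sphere of `ℝᴺ`,
rotating a coordinate plane gives `E x_k⁴ = 3 E x_k² x_l²`, and `E (∑ x_k²)² = 1` then forces
`E x_k² x_l² = (if k = l then 3 else 1) / (N (N + 2))`. Hence `E ‖qᵢ‖⁴ = 24 / (N (N + 2))`, and
`N = 4n` gives `12 / (2n + 1)`.
-/

open Finset Metric
open scoped InnerProductSpace

section PlaneRotation

variable {ι : Type*} [Fintype ι] [DecidableEq ι]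

noncomputable def planeRotation {k l : ι} (hkl : k ≠ l) {c s : ℝ} (hcs : c ^ 2 + s ^ 2 = 1) :
    EuclideanSpace ℝ ι ≃ₗᵢ[ℝ] EuclideanSpace ℝ ι :=
  LinearIsometry.toLinearIsometryEquiv
    { toFun x := WithLp.toLp 2 fun m =>
        if m = k then c * x k - s * x l else if m = l then s * x k + c * x l else x m
      map_add' x y := by
        ext m
        simp only [PiLp.add_apply]
        split_ifs <;> ring
      map_smul' a x := by
        ext m
        simp only [PiLp.smul_apply, smul_eq_mul, RingHom.id_apply]
        split_ifs <;> ring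
      norm_map' x := by
        simp only [EuclideanSpace.norm_eq, Real.norm_eq_abs, sq_abs, LinearMap.coe_mk,
          AddHom.coe_mk]
        congr 1
        rw [← sub_eq_zero, ← Finset.sum_sub_distrib, Fintype.sum_eq_add k l hkl]
        · simp only [↓reduceIte, hkl.symm]
          linear_combination (x k ^ 2 + x l ^ 2) * hcs
        · rintro m ⟨hmk, hml⟩
          simp [hmk, hml] }
    rfl

@[simp] lemma planeRotation_apply {k l : ι} (hkl : k ≠ l) {c s : ℝ} (hcs : c ^ 2 + s ^ 2 = 1)
    (x : EuclideanSpace ℝ ι) (m : ι) :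
    planeRotation hkl hcs x m =
      if m = k then c * x k - s * x l else if m = l then s * x k + c * x l else x m :=
  rfl

end PlaneRotation

lemma integral_comp_linearIsometryEquiv {E G : Type*} [NormedAddCommGroup E] [NormedSpace ℝ E]
    [MeasurableSpace E] [BorelSpace E] [NormedAddCommGroup G] [NormedSpace ℝ G] {μ : Measure E}
    (O : E ≃ₗᵢ[ℝ] E) (hO : μ.map O = μ) (f : E → G) : ∫ x, f (O x) ∂μ = ∫ x, f x ∂μ :=
  MeasurePreserving.integral_comp ⟨O.continuous.measurable, hO⟩
    O.toHomeomorph.measurableEmbedding f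

lemma integral_norm_sum_sq_of_integral_inner_eq_zero {X E ι : Type*} [MeasurableSpace X]
    {μ : Measure X} [NormedAddCommGroup E] [InnerProductSpace ℝ E] (s : Finset ι)
    {f : ι → X → E} (hint : ∀ i j, Integrable (fun x => ⟪f i x, f j x⟫_ℝ) μ)
    (horth : ∀ i j, i ≠ j → ∫ x, ⟪f i x, f j x⟫_ℝ ∂μ = 0) :
    ∫ x, ‖∑ i ∈ s, f i x‖ ^ 2 ∂μ = ∑ i ∈ s, ∫ x, ‖f i x‖ ^ 2 ∂μ := by
  simp_rw [← real_inner_self_eq_norm_sq, sum_inner, inner_sum]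
  rw [integral_finsetSum _ fun i _ => integrable_finsetSum _ fun j _ => hint i j]
  refine Finset.sum_congr rfl fun i hi => ?_
  rw [integral_finsetSum _ fun j _ => hint i j]
  exact Finset.sum_eq_single_of_mem i hi fun j _ hji => horth i j hji.symm

section Moments

variable {ι : Type*} [Fintype ι] {μ : Measure (EuclideanSpace ℝ ι)}

lemma ae_mem_sphere [IsProbabilityMeasure μ] (hsphere : μ (sphere 0 1) = 1) :
    ∀ᵐ x ∂μ, x ∈ sphere (0 : EuclideanSpace ℝ ι) 1 :=
  (prob_compl_eq_zero_iff isClosed_sphere.measurableSet).2 hsphere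

lemma Continuous.integrable_of_sphere [IsProbabilityMeasure μ] (hsphere : μ (sphere 0 1) = 1)
    {f : EuclideanSpace ℝ ι → ℝ} (hf : Continuous f) : Integrable f μ := by
  have h := hf.continuousOn.integrableOn_compact (μ := μ) (isCompact_sphere 0 1)
  rwa [IntegrableOn, Measure.restrict_eq_self_of_ae_mem (ae_mem_sphere hsphere)] at h

lemma integral_sum_sq_coord_sq [IsProbabilityMeasure μ] (hsphere : μ (sphere 0 1) = 1) :
    ∫ x, (∑ k, x k ^ 2) ^ 2 ∂μ = 1 := by
  calc ∫ x, (∑ k, x k ^ 2) ^ 2 ∂μ = ∫ _, (1 : ℝ) ∂μ :=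
        integral_congr_ae <| (ae_mem_sphere hsphere).mono fun x hx => by
          simp [← EuclideanSpace.real_norm_sq_eq, mem_sphere_zero_iff_norm.1 hx]
    _ = 1 := by simp

variable [DecidableEq ι]

lemma integral_coord_pow_four_eq
    (hinv : ∀ O : EuclideanSpace ℝ ι ≃ₗᵢ[ℝ] EuclideanSpace ℝ ι, μ.map O = μ) (k l : ι) :
    ∫ x, x k ^ 4 ∂μ = ∫ x, x l ^ 4 ∂μ := by
  rcases eq_or_ne k l with rfl | hkl
  · rfl
  have hcs : (0 : ℝ) ^ 2 + 1 ^ 2 = 1 := by norm_num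
  rw [← integral_comp_linearIsometryEquiv _ (hinv (planeRotation hkl hcs))]
  simp [Even.neg_pow (by decide : Even 4)]

lemma integral_coord_pow_four_eq_three_mul [IsProbabilityMeasure μ]
    (hsphere : μ (sphere 0 1) = 1)
    (hinv : ∀ O : EuclideanSpace ℝ ι ≃ₗᵢ[ℝ] EuclideanSpace ℝ ι, μ.map O = μ) {k l : ι}
    (hkl : k ≠ l) : ∫ x, x k ^ 4 ∂μ = 3 * ∫ x, x k ^ 2 * x l ^ 2 ∂μ := by
  -- Rotations by `±θ` with `cos θ = 3/5`: any `θ ∉ (π/2)ℤ` would do, this one avoids square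
  -- roots. In the sum of the two rotated fourth powers the odd moments cancel pointwise.
  have hcs : (3 / 5 : ℝ) ^ 2 + (4 / 5) ^ 2 = 1 := by norm_num
  have hcs' : (3 / 5 : ℝ) ^ 2 + (-4 / 5) ^ 2 = 1 := by norm_num
  set R := planeRotation hkl hcs
  set R' := planeRotation hkl hcs'
  have hsum : ∀ x, (R x k) ^ 4 + (R' x k) ^ 4 = 2 * (3 / 5) ^ 4 * x k ^ 4
      + 12 * (3 / 5) ^ 2 * (4 / 5) ^ 2 * (x k ^ 2 * x l ^ 2) + 2 * (4 / 5) ^ 4 * x l ^ 4 := by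
    intro x
    simp only [R, R', planeRotation_apply, if_pos]
    ring
  have hint {f : EuclideanSpace ℝ ι → ℝ} (hf : Continuous f) : Integrable f μ :=
    hf.integrable_of_sphere hsphere
  have h : 2 * ∫ x, x k ^ 4 ∂μ = 2 * (3 / 5) ^ 4 * ∫ x, x k ^ 4 ∂μ
      + 12 * (3 / 5) ^ 2 * (4 / 5) ^ 2 * ∫ x, x k ^ 2 * x l ^ 2 ∂μ
      + 2 * (4 / 5) ^ 4 * ∫ x, x l ^ 4 ∂μ := by
    calc 2 * ∫ x, x k ^ 4 ∂μ = ∫ x, (R x k) ^ 4 ∂μ + ∫ x, (R' x k) ^ 4 ∂μ := by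
          rw [integral_comp_linearIsometryEquiv R (hinv R) (fun x => x k ^ 4),
            integral_comp_linearIsometryEquiv R' (hinv R') (fun x => x k ^ 4)]
          ring
      _ = ∫ x, ((R x k) ^ 4 + (R' x k) ^ 4) ∂μ :=
          (integral_add (hint (by fun_prop)) (hint (by fun_prop))).symm
      _ = _ := by
          rw [integral_congr_ae (.of_forall hsum), integral_add (hint (by fun_prop))
            (hint (by fun_prop)), integral_add (hint (by fun_prop)) (hint (by fun_prop)),
            integral_const_mul, integral_const_mul, integral_const_mul]
  rw [integral_coord_pow_four_eq hinv l k] at h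
  linarith

lemma integral_sq_sum_sq_coord_eq [IsProbabilityMeasure μ] (hsphere : μ (sphere 0 1) = 1)
    {c : ℝ} (h : ∀ k l, ∫ x, x k ^ 2 * x l ^ 2 ∂μ = (if k = l then 3 else 1) * c)
    (S : Finset ι) : ∫ x, (∑ k ∈ S, x k ^ 2) ^ 2 ∂μ = #S * (#S + 2) * c := by
  simp_rw [sq (∑ k ∈ S, _), Finset.sum_mul_sum]
  rw [integral_finsetSum _ fun k _ => integrable_finsetSum _ fun l _ =>
    Continuous.integrable_of_sphere hsphere (by fun_prop)]
  rw [Finset.sum_congr rfl fun k _ => integral_finsetSum _ fun l _ =>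
    Continuous.integrable_of_sphere hsphere (by fun_prop)]
  have hsplit (k l : ι) :
      (if k = l then (3 : ℝ) else 1) * c = c + if k = l then 2 * c else 0 := by
    split_ifs <;> ring
  simp only [h, hsplit, sum_add_distrib, sum_ite_eq, sum_const, nsmul_eq_mul, sum_ite_mem,
    inter_self]
  ring

lemma integral_sq_coord_mul_sq_coord [IsProbabilityMeasure μ] (hsphere : μ (sphere 0 1) = 1)
    (hinv : ∀ O : EuclideanSpace ℝ ι ≃ₗᵢ[ℝ] EuclideanSpace ℝ ι, μ.map O = μ) (k l : ι) :
    ∫ x, x k ^ 2 * x l ^ 2 ∂μ =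
      (if k = l then 3 else 1) / (Fintype.card ι * (Fintype.card ι + 2)) := by
  have hc : ∀ k' l', ∫ x, x k' ^ 2 * x l' ^ 2 ∂μ
      = (if k' = l' then 3 else 1) * ((∫ x, x k ^ 4 ∂μ) / 3) := by
    intro k' l'
    have hk' := integral_coord_pow_four_eq hinv k' k
    split_ifs with h
    · subst h
      simp_rw [← pow_add]
      linarith
    · linarith [integral_coord_pow_four_eq_three_mul hsphere hinv h]
  have hnorm := integral_sq_sum_sq_coord_eq hsphere hc Finset.univ
  rw [integral_sum_sq_coord_sq hsphere, Finset.card_univ] at hnorm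
  rw [hc, eq_one_div_of_mul_eq_one_right hnorm.symm, mul_one_div]

theorem integral_sq_sum_sq_coord [IsProbabilityMeasure μ] (hsphere : μ (sphere 0 1) = 1)
    (hinv : ∀ O : EuclideanSpace ℝ ι ≃ₗᵢ[ℝ] EuclideanSpace ℝ ι, μ.map O = μ) (S : Finset ι) :
    ∫ x, (∑ k ∈ S, x k ^ 2) ^ 2 ∂μ =
      #S * (#S + 2) / (Fintype.card ι * (Fintype.card ι + 2)) := by
  rw [integral_sq_sum_sq_coord_eq hsphere (c := 1 / (Fintype.card ι * (Fintype.card ι + 2)))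
    (fun k l => by rw [integral_sq_coord_mul_sq_coord hsphere hinv, mul_one_div])]
  ring

end Moments

noncomputable def qJ : ℍ[ℝ] := ⟨0, 0, 1, 0⟩

lemma norm_qI : ‖qI‖ = 1 := by
  rw [← Real.sqrt_one, ← Real.sqrt_sq (norm_nonneg qI), sq, ← Quaternion.normSq_eq_norm_mul_self,
    Quaternion.normSq_def']
  norm_num [qI]

lemma qJ_mul (q : ℍ[ℝ]) : qJ * q = ⟨-q.imJ, q.imK, q.re, -q.imI⟩ := by
  ext <;> simp <;> simp [qJ]

lemma norm_Hopf (q : ℍ[ℝ]) : ‖Hopf q‖ = ‖q‖ ^ 2 := by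
  rw [Hopf, norm_mul, norm_mul, Quaternion.norm_star, norm_qI]
  ring

lemma Hopf_qJ_mul (q : ℍ[ℝ]) : Hopf (qJ * q) = -Hopf q := by
  have h : star qJ * qI * qJ = -qI := by ext <;> simp <;> simp [qI, qJ]
  calc Hopf (qJ * q) = star q * (star qJ * qI * qJ) * q := by
        simp only [Hopf, star_mul, mul_assoc]
    _ = -Hopf q := by rw [h, Hopf, mul_neg, neg_mul]

@[fun_prop]
lemma continuous_Hopf : Continuous Hopf := by
  unfold Hopf
  fun_prop

section Blocks

variable {n : ℕ}

def blockIdx (n : ℕ) (i : Fin n) (t : Fin 4) : Fin (4 * n) :=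
  ⟨4 * i + t, by omega⟩

@[simp] lemma blockIdx_inj {i j : Fin n} {s t : Fin 4} :
    blockIdx n i s = blockIdx n j t ↔ i = j ∧ s = t := by
  simp only [blockIdx, Fin.ext_iff]
  omega

lemma blockIdx_injective (i : Fin n) : Function.Injective (blockIdx n i) :=
  fun _ _ h => (blockIdx_inj.1 h).2

lemma blockQuat_eq (i : Fin n) (x : EuclideanSpace ℝ (Fin (4 * n))) :
    blockQuat n i x =
      Quaternion.linearIsometryEquivTuple.symm (WithLp.toLp 2 fun t => x (blockIdx n i t)) :=
  rfl

@[fun_prop]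
lemma continuous_blockQuat (i : Fin n) : Continuous (blockQuat n i) := by
  simp_rw [funext (blockQuat_eq i)]
  fun_prop

def blockCoords (n : ℕ) (i : Fin n) : Finset (Fin (4 * n)) :=
  univ.map ⟨blockIdx n i, blockIdx_injective i⟩

lemma card_blockCoords (i : Fin n) : #(blockCoords n i) = 4 := by
  simp [blockCoords]

lemma norm_blockQuat_sq (i : Fin n) (x : EuclideanSpace ℝ (Fin (4 * n))) :
    ‖blockQuat n i x‖ ^ 2 = ∑ k ∈ blockCoords n i, x k ^ 2 := by
  rw [blockQuat_eq, LinearIsometryEquiv.norm_map, EuclideanSpace.real_norm_sq_eq, blockCoords,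
    sum_map]
  rfl

noncomputable def blockRotation (i : Fin n) :
    EuclideanSpace ℝ (Fin (4 * n)) ≃ₗᵢ[ℝ] EuclideanSpace ℝ (Fin (4 * n)) :=
  have hcs : (0 : ℝ) ^ 2 + 1 ^ 2 = 1 := by norm_num
  (planeRotation (k := blockIdx n i 3) (l := blockIdx n i 1) (by simp) hcs).trans
    (planeRotation (k := blockIdx n i 0) (l := blockIdx n i 2) (by simp) hcs)

lemma blockQuat_blockRotation (i : Fin n) (x : EuclideanSpace ℝ (Fin (4 * n))) :
    blockQuat n i (blockRotation i x) = qJ * blockQuat n i x := by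
  rw [qJ_mul]
  ext <;> simp [blockQuat_eq, blockRotation]

lemma blockQuat_blockRotation_of_ne {i j : Fin n} (hij : i ≠ j)
    (x : EuclideanSpace ℝ (Fin (4 * n))) :
    blockQuat n j (blockRotation i x) = blockQuat n j x := by
  ext <;> simp [blockQuat_eq, blockRotation, hij.symm]

lemma integral_inner_Hopf_blockQuat_of_ne {μ : Measure (EuclideanSpace ℝ (Fin (4 * n)))}
    (hinv : ∀ O : EuclideanSpace ℝ (Fin (4 * n)) ≃ₗᵢ[ℝ] EuclideanSpace ℝ (Fin (4 * n)),
      μ.map O = μ) {i j : Fin n} (hij : i ≠ j) :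
    ∫ x, ⟪Hopf (blockQuat n i x), Hopf (blockQuat n j x)⟫_ℝ ∂μ = 0 := by
  have h := integral_comp_linearIsometryEquiv (blockRotation i) (hinv _)
    fun x => ⟪Hopf (blockQuat n i x), Hopf (blockQuat n j x)⟫_ℝ
  simp only [blockQuat_blockRotation, blockQuat_blockRotation_of_ne hij, Hopf_qJ_mul,
    inner_neg_left, integral_neg] at h
  linarith

lemma integral_norm_Hopf_blockQuat_sq {μ : Measure (EuclideanSpace ℝ (Fin (4 * n)))}
    [IsProbabilityMeasure μ] (hsphere : μ (sphere 0 1) = 1)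
    (hinv : ∀ O : EuclideanSpace ℝ (Fin (4 * n)) ≃ₗᵢ[ℝ] EuclideanSpace ℝ (Fin (4 * n)),
      μ.map O = μ) (i : Fin n) :
    ∫ x, ‖Hopf (blockQuat n i x)‖ ^ 2 ∂μ = 24 / (4 * n * (4 * n + 2)) := by
  simp_rw [norm_Hopf, norm_blockQuat_sq]
  rw [integral_sq_sum_sq_coord hsphere hinv, card_blockCoords]
  simp only [Fintype.card_fin, Nat.cast_ofNat, Nat.cast_mul]
  norm_num

end Blocks

/-- The expected squared failure-to-close of a random spatial arm of total length 2:
`E(ℓ², Arm₃(n)) = n·E(|eⱼ|², Arm₃(n)) = 6/(n + 1/2) = 12/(2n+1)`.  Here `μ` is the uniform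
(rotation-invariant) probability measure on the unit sphere in `ℝ^{4n}` and the edges of the
arm determined by `√2·x` are `2·Hopf(qᵢ(x))`. -/
theorem expected_squared_failure_to_close (n : ℕ) (hn : 1 ≤ n)
    (μ : Measure (EuclideanSpace ℝ (Fin (4 * n)))) [IsProbabilityMeasure μ]
    (hsphere : μ (Metric.sphere (0 : EuclideanSpace ℝ (Fin (4 * n))) 1) = 1)
    (hinv : ∀ O : EuclideanSpace ℝ (Fin (4 * n)) ≃ₗᵢ[ℝ] EuclideanSpace ℝ (Fin (4 * n)),
      Measure.map (fun x => O x) μ = μ) :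
    ∫ x, ‖∑ i : Fin n, (2 : ℝ) • Hopf (blockQuat n i x)‖ ^ 2 ∂μ
      = 12 / (2 * (n : ℝ) + 1) := by
  have hint (i j : Fin n) :
      Integrable (fun x => ⟪Hopf (blockQuat n i x), Hopf (blockQuat n j x)⟫_ℝ) μ :=
    Continuous.integrable_of_sphere hsphere (by fun_prop)
  calc ∫ x, ‖∑ i : Fin n, (2 : ℝ) • Hopf (blockQuat n i x)‖ ^ 2 ∂μ
      = 4 * ∫ x, ‖∑ i : Fin n, Hopf (blockQuat n i x)‖ ^ 2 ∂μ := by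
        simp_rw [← smul_sum, norm_smul, mul_pow, integral_const_mul]
        norm_num
    _ = 4 * ∑ i : Fin n, ∫ x, ‖Hopf (blockQuat n i x)‖ ^ 2 ∂μ := by
        rw [integral_norm_sum_sq_of_integral_inner_eq_zero _ hint
          fun i j => integral_inner_Hopf_blockQuat_of_ne hinv]
    _ = 12 / (2 * (n : ℝ) + 1) := by
        have hn' : (n : ℝ) ≠ 0 := Nat.cast_ne_zero.2 (by omega)
        simp only [integral_norm_Hopf_blockQuat_sq hsphere hinv, sum_const, card_univ,
          Fintype.card_fin, nsmul_eq_mul]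
        field_simp
        ring
end
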